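/- arXiv:1004.2873 — 3 statements merged into one kernel-verified Lean document; each statement's English description precedes it below -/
import Mathlib

section
/- Under the bounded (finite acyclic path) semantics of length k, the redefined release operator satisfies: π^i ⊨_k φ R ψ implies π^i ⊨_k ¬(¬φ U ¬ψ), i.e., bounded release is sound with respect to the dual of bounded until. -/
/-- Bounded "until" over a finite (non-looping) path of length k. -/
def BUntil (k : ℕ) (φ ψ : ℕ → Prop) (i : ℕ) : Prop :=
  ∃ j, i ≤ j ∧ j ≤ k ∧ ψ j ∧ ∀ n, i ≤ n → n < j → φ n

/-- Bounded "release", as redefined for finite acyclic paths. -/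
def BRelease (k : ℕ) (φ ψ : ℕ → Prop) (i : ℕ) : Prop :=
  ∃ j, i ≤ j ∧ j ≤ k ∧ φ j ∧ ∀ n, i ≤ n → n ≤ j → ψ n

/-- Bounded release is sound w.r.t. the dual of bounded until. -/
theorem bounded_release_sound (k : ℕ) (φ ψ : ℕ → Prop) (i : ℕ)
    (h : BRelease k φ ψ i) :
    ¬ BUntil k (fun n => ¬ φ n) (fun n => ¬ ψ n) i := by
  rintro ⟨j', hij', hj'k, hnψ, hnφ⟩
  obtain ⟨j, hij, hjk, hφ, hψ⟩ := h
  rcases le_or_gt j' j with hle | hlt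
  · exact hnψ (hψ j' hij' hle)
  · exact hnφ j hij hlt hφ
end

section
/- For an ultimately periodic infinite path π = u v^ω with |u| = l and |uv| = k+1, the bounded semantics with loop agrees with the infinite semantics for the until operator: for any i ≤ k, π^i ⊨ φ U ψ (infinite semantics) if and only if either there exists j with i ≤ j ≤ k such that π^j ⊨ ψ and φ holds at all positions between i and j, or there exists j with l ≤ j < i such that π^j ⊨ ψ and φ holds at all positions in [i,k] ∪ [l, j), where positions beyond k wrap around to position l. -/
/-- Infinite-path semantics of Until for state formulas φ, ψ along a path p. -/
def Until {S : Type} (p : ℕ → S) (φ ψ : S → Prop) (i : ℕ) : Prop :=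
  ∃ j, i ≤ j ∧ ψ (p j) ∧ ∀ n, i ≤ n → n < j → φ (p n)

private lemma period_step {S : Type} (p : ℕ → S) (l k : ℕ) (hlk : l ≤ k)
    (hper : ∀ i, l ≤ i → p i = p (l + (i - l) % (k - l + 1)))
    (n : ℕ) (hn : l ≤ n) : p (n + (k - l + 1)) = p n := by
  have h1 := hper (n + (k - l + 1)) (by omega)
  have h2 := hper n hn
  have e : n + (k - l + 1) - l = (n - l) + (k - l + 1) := by omega
  rw [h1, e, Nat.add_mod_right, ← h2]

/-- For an ultimately periodic path p = u v^ω with loop start l and last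
position k (so |u| = l, |uv| = k+1), the infinite semantics of φ U ψ at
position i ≤ k agrees with the bounded semantics with loop: either a witness
j for ψ exists in [i,k] with φ holding in between, or a witness exists in
[l, i) reached via the loop, with φ holding at all positions in
[i,k] ∪ [l, j). -/
theorem until_bounded_loop_equiv {S : Type} (p : ℕ → S) (φ ψ : S → Prop)
    (l k : ℕ) (hlk : l ≤ k)
    (hper : ∀ i, l ≤ i → p i = p (l + (i - l) % (k - l + 1)))
    (i : ℕ) (hik : i ≤ k) :
    Until p φ ψ i ↔
      ((∃ j, i ≤ j ∧ j ≤ k ∧ ψ (p j) ∧ ∀ n, i ≤ n → n < j → φ (p n)) ∨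
       (∃ j, l ≤ j ∧ j < i ∧ ψ (p j) ∧
         (∀ n, i ≤ n → n ≤ k → φ (p n)) ∧
         (∀ n, l ≤ n → n < j → φ (p n)))) := by
  classical
  set T := k - l + 1 with hT
  have step : ∀ n, l ≤ n → p (n + T) = p n := period_step p l k hlk hper
  constructor
  · rintro ⟨J0, hiJ0, hψ0, hφ0⟩
    have hex : ∃ J, i ≤ J ∧ J ≤ J0 ∧ ψ (p J) := ⟨J0, hiJ0, le_refl _, hψ0⟩
    set J := Nat.find hex with hJdef
    obtain ⟨hiJ, hJJ0, hψJ⟩ := Nat.find_spec hex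
    have hmin : ∀ m, m < J → ¬(i ≤ m ∧ m ≤ J0 ∧ ψ (p m)) := fun m hm => Nat.find_min hex hm
    have hJsmall : J ≤ k + T := by
      by_contra h
      push_neg at h
      have hl : l ≤ J - T := by omega
      have : p (J - T) = p J := by
        have := step (J - T) hl
        rw [Nat.sub_add_cancel (by omega)] at this
        exact this.symm
      exact hmin (J - T) (by omega) ⟨by omega, by omega, this ▸ hψJ⟩
    by_cases hJk : J ≤ k
    · exact Or.inl ⟨J, hiJ, hJk, hψJ, fun n hn hnJ => hφ0 n hn (by omega)⟩
    · push_neg at hJk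
      have hl' : l ≤ J - T := by omega
      have hpj : p (J - T) = p J := by
        have := step (J - T) hl'
        rw [Nat.sub_add_cancel (by omega)] at this
        exact this.symm
      by_cases hij' : i ≤ J - T
      · exact Or.inl ⟨J - T, hij', by omega, hpj ▸ hψJ,
          fun n hn hnj => hφ0 n hn (by omega)⟩
      · push_neg at hij'
        refine Or.inr ⟨J - T, hl', hij', hpj ▸ hψJ,
          fun n hn hnk => hφ0 n hn (by omega), fun n hln hnj => ?_⟩
        have : p (n + T) = p n := step n hln
        rw [← this]
        exact hφ0 (n + T) (by omega) (by omega)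
  · rintro (⟨j, hij, hjk, hψj, hφj⟩ | ⟨j, hlj, hji, hψj, hφ1, hφ2⟩)
    · exact ⟨j, hij, hψj, hφj⟩
    · refine ⟨j + T, by omega, (step j hlj) ▸ hψj, fun n hn hnJ => ?_⟩
      by_cases hnk : n ≤ k
      · exact hφ1 n hn hnk
      · push_neg at hnk
        have hln : l ≤ n - T := by omega
        have : p (n - T) = p n := by
          have := step (n - T) hln
          rw [Nat.sub_add_cancel (by omega)] at this
          exact this.symm
        rw [← this]
        exact hφ2 (n - T) hln (by omega)
end

section
/- For propositional (state) formulas over an ultimately periodic path π = u v^ω with loop start l and last position k, if φ U ψ holds at position k under the infinite semantics, then there exists a single index j with l ≤ j ≤ k such that ψ holds at position j (the 'eventuality witness' can always be chosen inside the loop). -/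
/-- On an ultimately periodic path p = u v^ω with loop start l and last
position k, if φ U ψ holds at position k then the eventuality witness for ψ
can always be chosen inside the loop, i.e., at a single index j with
l ≤ j ≤ k. -/
theorem until_eventuality_in_loop {S : Type} (p : ℕ → S) (φ ψ : S → Prop)
    (l k : ℕ) (hlk : l ≤ k)
    (hper : ∀ i, l ≤ i → p i = p (l + (i - l) % (k - l + 1)))
    (h : Until p φ ψ k) :
    ∃ j, l ≤ j ∧ j ≤ k ∧ ψ (p j) := by
  obtain ⟨j, hkj, hψ, -⟩ := h
  refine ⟨l + (j - l) % (k - l + 1), Nat.le_add_right l _, ?_, ?_⟩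
  · have := Nat.mod_lt (j - l) (show 0 < k - l + 1 by omega)
    omega
  · rw [← hper j (le_trans hlk hkj)]; exact hψ
end
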